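/- arXiv:1905.02169 — 3 statements merged into one kernel-verified Lean document; each statement's English description precedes it below -/
import Mathlib

section
/- Let K be a field, ν a valuation on K[x], μ a fixed extension of ν to K̄[x] where K̄ is a fixed algebraic closure of K. For every monic polynomial f ∈ K[x], one has δ(f) = ε(f). In particular, δ(f) does not depend on the choice of the extension μ of ν to K̄[x]. -/
open Polynomial

/-- A valuation on a commutative ring `R` with values in `Γ ∪ {∞}`. -/
def IsVal {R : Type*} [CommRing R] {Γ : Type*} [AddCommGroup Γ] [LinearOrder Γ] [IsOrderedAddMonoid Γ]
    (v : R → WithTop Γ) : Prop :=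
  (∀ a b, v (a * b) = v a + v b) ∧
  (∀ a b, min (v a) (v b) ≤ v (a + b)) ∧
  v 1 = 0 ∧ v 0 = ⊤

/-- The `i`-th coefficient of the `q`-expansion of `f`. -/
noncomputable def qCoeff {K : Type*} [Field K] (q f : K[X]) (i : ℕ) : K[X] :=
  (f /ₘ q ^ i) %ₘ q

/-- The `q`-truncation `ν_q` of a valuation `ν` on `K[x]`. -/
noncomputable def trunc {K : Type*} [Field K] {Γ : Type*} [AddCommGroup Γ] [LinearOrder Γ] [IsOrderedAddMonoid Γ]
    (v : K[X] → WithTop Γ) (q : K[X]) (f : K[X]) : WithTop Γ :=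
  (Finset.range (f.natDegree + 1)).inf fun i => v (qCoeff q f i * q ^ i)

/-- The quantity `(ν(f) - ν(∂_b f))/b`, an element of `Γ ∪ {±∞}`. -/
noncomputable def epsAt {K : Type*} [Field K] {Γ : Type*} [AddCommGroup Γ] [LinearOrder Γ] [IsOrderedAddMonoid Γ]
    [Module ℚ Γ] (v : K[X] → WithTop Γ) (f : K[X]) (b : ℕ) : WithBot (WithTop Γ) :=
  if h : v (hasseDeriv b f) = ⊤ then ⊥
  else (((v f).map fun c => (b : ℚ)⁻¹ • (c - (v (hasseDeriv b f)).untop h) : WithTop Γ) :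
    WithBot (WithTop Γ))

/-- `ε(f) = max_b (ν(f) - ν(∂_b f))/b` over positive integers `b`. -/
noncomputable def eps {K : Type*} [Field K] {Γ : Type*} [AddCommGroup Γ] [LinearOrder Γ] [IsOrderedAddMonoid Γ]
    [Module ℚ Γ] (v : K[X] → WithTop Γ) (f : K[X]) : WithBot (WithTop Γ) :=
  (Finset.Icc 1 f.natDegree).sup (epsAt v f)

/-- A (Spivakovsky) key polynomial for `ν`. -/
def IsKeyPoly {K : Type*} [Field K] {Γ : Type*} [AddCommGroup Γ] [LinearOrder Γ] [IsOrderedAddMonoid Γ]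
    [Module ℚ Γ] (v : K[X] → WithTop Γ) (Q : K[X]) : Prop :=
  Q.Monic ∧ ∀ f : K[X], eps v Q ≤ eps v f → Q.degree ≤ f.degree

/-- `f` and `g` have the same initial form in the graded algebra of `ν`. -/
def EquivIn {K : Type*} [Field K] {Γ : Type*} [AddCommGroup Γ] [LinearOrder Γ] [IsOrderedAddMonoid Γ]
    (v : K[X] → WithTop Γ) (f g : K[X]) : Prop :=
  v f = v g ∧ (v f < v (f - g) ∨ v f = ⊤)

/-- `g` ν-divides `f`. -/
def DvdIn {K : Type*} [Field K] {Γ : Type*} [AddCommGroup Γ] [LinearOrder Γ] [IsOrderedAddMonoid Γ]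
    (v : K[X] → WithTop Γ) (g f : K[X]) : Prop :=
  ∃ h : K[X], EquivIn v f (g * h)

/-- A MacLane–Vaquié key polynomial for `ν`. -/
def IsMVKeyPoly {K : Type*} [Field K] {Γ : Type*} [AddCommGroup Γ] [LinearOrder Γ] [IsOrderedAddMonoid Γ]
    (v : K[X] → WithTop Γ) (φ : K[X]) : Prop :=
  φ.Monic ∧
  (∀ f g : K[X], DvdIn v φ (f * g) → DvdIn v φ f ∨ DvdIn v φ g) ∧
  (∀ f : K[X], DvdIn v φ f → φ.degree ≤ f.degree)

/-- `α(Q)`: the minimal degree of a polynomial on which `ν_Q` differs from `ν`. -/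
noncomputable def alphaDeg {K : Type*} [Field K] {Γ : Type*} [AddCommGroup Γ] [LinearOrder Γ] [IsOrderedAddMonoid Γ]
    (v : K[X] → WithTop Γ) (Q : K[X]) : ℕ :=
  sInf {d | ∃ f : K[X], f.natDegree = d ∧ trunc v Q f < v f}

/-- `Ψ(Q)`: monic polynomials of degree `α(Q)` with `ν_Q(f) < ν(f)`. -/
def Psi {K : Type*} [Field K] {Γ : Type*} [AddCommGroup Γ] [LinearOrder Γ] [IsOrderedAddMonoid Γ]
    (v : K[X] → WithTop Γ) (Q : K[X]) : Set K[X] :=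
  {f | f.Monic ∧ trunc v Q f < v f ∧ f.natDegree = alphaDeg v Q}

/-!
Over `K̄` the polynomial splits, `F = ∏ (X - a)`, and `ν(∂_b f) = μ(∂_b F)` because `μ` extends `ν`
and Hasse derivatives commute with base change; so everything happens in `K̄[x]`. Put
`δ = max μ(X - a)`. From `∂_{k+1}((X - a) p) = (X - a) ∂_{k+1} p + ∂_k p`, induction on the number of
factors gives `μ(F) ≤ μ(∂_b F) + b δ` for all `b`, hence `ε(F) ≤ δ`, and a strict inequality for
`b ≥ 1` when every factor has value `< δ`. For the reverse inequality let `b` be the number of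
roots with `μ(X - a) = δ` and write `F = A B` with `A` the product of their factors. In the Leibniz
expansion `∂_b F = ∂_b A · B + ∑_{i < b} ∂_i A · ∂_{b-i} B` the first term is `B`, and every other
term has value `> μ(B) = μ(F) - b δ`; thus `μ(∂_b F) = μ(F) - b δ`. If `δ = ∞` instead, then
`μ(F) = ∞` while `∂_n F = 1`, so `ε(F) = ∞` as well.
-/

namespace Polynomial

variable {R : Type*} [CommRing R]

theorem hasseDeriv_succ_X_sub_C_mul (a : R) (p : R[X]) (k : ℕ) :
    hasseDeriv (k + 1) ((X - C a) * p) = (X - C a) * hasseDeriv (k + 1) p + hasseDeriv k p := by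
  have hX : ∀ i, hasseDeriv (i + 2) (X - C a) = 0 := fun i => by
    rw [_root_.map_sub, hasseDeriv_X _ (by omega), hasseDeriv_C _ _ (by omega), sub_zero]
  rw [hasseDeriv_mul, Finset.Nat.sum_antidiagonal_eq_sum_range_succ
    (fun i j => hasseDeriv i (X - C a) * hasseDeriv j p), Finset.sum_range_succ',
    Finset.sum_range_succ']
  simp only [hX, zero_mul, Finset.sum_const_zero, zero_add]
  simp [add_comm]

theorem map_hasseDeriv {S : Type*} [CommRing S] (φ : R →+* S) (k : ℕ) (f : R[X]) :
    (hasseDeriv k f).map φ = hasseDeriv k (f.map φ) := by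
  ext n
  simp [hasseDeriv_coeff]

theorem hasseDeriv_card_prod_X_sub_C [Nontrivial R] (s : Multiset R) :
    hasseDeriv (Multiset.card s) (s.map fun a => X - C a).prod = 1 := by
  rw [← natDegree_multiset_prod_X_sub_C_eq_card, hasseDeriv_natDegree_eq_C,
    (monic_multiset_prod_of_monic _ _ fun a _ => monic_X_sub_C a).leadingCoeff, C_1]

end Polynomial

def IsVal.toAddValuation {R : Type*} [CommRing R] {Γ : Type*} [AddCommGroup Γ] [LinearOrder Γ]
    [IsOrderedAddMonoid Γ] {v : R → WithTop Γ} (hv : IsVal v) : AddValuation R (WithTop Γ) :=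
  AddValuation.of v hv.2.2.2 hv.2.2.1 hv.2.1 hv.1

namespace AddValuation

variable {R : Type*} [CommRing R] {Γ : Type*} [AddCommGroup Γ] [LinearOrder Γ]
  [IsOrderedAddMonoid Γ] (w : AddValuation R[X] (WithTop Γ))

theorem map_prod_X_sub_C_of_forall_eq {d : WithTop Γ} {t : Multiset R}
    (h : ∀ a ∈ t, w (X - C a) = d) : w (t.map fun a => X - C a).prod = Multiset.card t • d := by
  induction t using Multiset.induction with
  | empty => simp
  | cons a t ih =>
    rw [Multiset.map_cons, Multiset.prod_cons, w.map_mul, h a (Multiset.mem_cons_self a t),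
      ih fun b hb => h b (Multiset.mem_cons_of_mem hb), Multiset.card_cons, succ_nsmul']

theorem map_prod_X_sub_C_le_map_hasseDeriv_add_nsmul {d : WithTop Γ} {t : Multiset R}
    (h : ∀ a ∈ t, w (X - C a) ≤ d) (j : ℕ) :
    w (t.map fun a => X - C a).prod ≤ w (hasseDeriv j (t.map fun a => X - C a).prod) + j • d := by
  induction t using Multiset.induction generalizing j with
  | empty =>
    cases j with
    | zero => simp
    | succ k => simp [hasseDeriv_apply_one]
  | cons a t ih =>
    have ih := ih fun b hb => h b (Multiset.mem_cons_of_mem hb)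
    have ha := h a (Multiset.mem_cons_self a t)
    set P := (t.map fun a => X - C a).prod
    cases j with
    | zero => simp
    | succ k =>
      rw [Multiset.map_cons, Multiset.prod_cons, hasseDeriv_succ_X_sub_C_mul, w.map_mul]
      calc w (X - C a) + w P
          ≤ min (w (X - C a) + w (hasseDeriv (k + 1) P) + (k + 1) • d)
              (w (hasseDeriv k P) + (k + 1) • d) := by
            refine le_min ?_ ?_
            · rw [add_assoc]; gcongr; exact ih _
            · rw [succ_nsmul, ← add_assoc, add_comm (w (X - C a))]
              gcongr; exact ih k
        _ = min (w ((X - C a) * hasseDeriv (k + 1) P)) (w (hasseDeriv k P)) + (k + 1) • d := by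
            rw [min_add_add_right, w.map_mul]
        _ ≤ _ := by gcongr; exact w.map_add _ _

theorem map_prod_X_sub_C_lt_map_hasseDeriv_add_nsmul {d : WithTop Γ} {t : Multiset R}
    (h : ∀ a ∈ t, w (X - C a) < d) {j : ℕ} (hj : j ≠ 0) :
    w (t.map fun a => X - C a).prod < w (hasseDeriv j (t.map fun a => X - C a).prod) + j • d := by
  obtain ⟨k, rfl⟩ := Nat.exists_eq_succ_of_ne_zero hj
  induction t using Multiset.induction generalizing k with
  | empty => simp [hasseDeriv_apply_one]
  | cons a t ih =>
    have ih := ih fun b hb => h b (Multiset.mem_cons_of_mem hb)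
    have ha := h a (Multiset.mem_cons_self a t)
    have hle := map_prod_X_sub_C_le_map_hasseDeriv_add_nsmul w
      (fun b hb => (h b (Multiset.mem_cons_of_mem hb)).le) k
    set P := (t.map fun a => X - C a).prod
    have hP : w P ≠ ⊤ := (ih 0 one_ne_zero).ne_top
    rw [Multiset.map_cons, Multiset.prod_cons, hasseDeriv_succ_X_sub_C_mul, w.map_mul]
    calc w (X - C a) + w P
        < min (w (X - C a) + w (hasseDeriv (k + 1) P) + (k + 1) • d)
            (w (hasseDeriv k P) + (k + 1) • d) := by
          refine lt_min ?_ ?_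
          · rw [add_assoc]
            exact WithTop.add_lt_add_left ha.ne_top (ih k k.succ_ne_zero)
          · rw [succ_nsmul, ← add_assoc, add_comm (w (X - C a))]
            exact WithTop.add_lt_add_of_le_of_lt hP hle ha
      _ = min (w ((X - C a) * hasseDeriv (k + 1) P)) (w (hasseDeriv k P)) + (k + 1) • d := by
          rw [min_add_add_right, w.map_mul]
      _ ≤ _ := by gcongr; exact w.map_add _ _

theorem map_hasseDeriv_card_prod_X_sub_C_mul [Nontrivial R] {d : Γ} {t u : Multiset R}
    (ht : ∀ a ∈ t, w (X - C a) = d) (hu : ∀ a ∈ u, w (X - C a) < d) :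
    w (hasseDeriv (Multiset.card t)
        ((t.map fun a => X - C a).prod * (u.map fun a => X - C a).prod)) =
      w (u.map fun a => X - C a).prod := by
  have hA := hasseDeriv_card_prod_X_sub_C t
  set A := (t.map fun a => X - C a).prod
  set B := (u.map fun a => X - C a).prod
  set n := Multiset.card t
  have hB : w B ≠ ⊤ := (map_prod_X_sub_C_lt_map_hasseDeriv_add_nsmul w hu one_ne_zero).ne_top
  rw [hasseDeriv_mul, Finset.Nat.sum_antidiagonal_eq_sum_range_succ
    (fun i j => hasseDeriv i A * hasseDeriv j B), Finset.sum_range_succ, Nat.sub_self, hA,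
    hasseDeriv_zero', one_mul, add_comm]
  refine w.map_add_eq_of_lt_left (w.map_lt_sum hB fun i hi => ?_)
  have hi : i < n := Finset.mem_range.mp hi
  have hdA : (n - i) • (d : WithTop Γ) ≤ w (hasseDeriv i A) := by
    refine WithTop.le_of_add_le_add_right (z := i • (d : WithTop Γ)) WithTop.coe_ne_top ?_
    rw [← add_nsmul, Nat.sub_add_cancel hi.le, ← map_prod_X_sub_C_of_forall_eq w ht]
    exact map_prod_X_sub_C_le_map_hasseDeriv_add_nsmul w (fun a ha => (ht a ha).le) i
  calc w B < w (hasseDeriv (n - i) B) + (n - i) • (d : WithTop Γ) :=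
        map_prod_X_sub_C_lt_map_hasseDeriv_add_nsmul w hu (Nat.sub_ne_zero_of_lt hi)
    _ ≤ w (hasseDeriv i A * hasseDeriv (n - i) B) := by
        rw [w.map_mul, add_comm]; gcongr

theorem exists_map_prod_X_sub_C_eq_map_hasseDeriv_add_nsmul [Nontrivial R] {s : Multiset R}
    {a₀ : R} (ha₀ : a₀ ∈ s) (hmax : ∀ a ∈ s, w (X - C a) ≤ w (X - C a₀)) :
    ∃ b ∈ Finset.Icc 1 (Multiset.card s),
      w (hasseDeriv b (s.map fun a => X - C a).prod) ≠ ⊤ ∧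
      w (s.map fun a => X - C a).prod =
        w (hasseDeriv b (s.map fun a => X - C a).prod) + b • w (X - C a₀) := by
  classical
  cases hδ : w (X - C a₀) with
  | top =>
    have hs : Multiset.card s ≠ 0 := (Multiset.card_pos_iff_exists_mem.mpr ⟨a₀, ha₀⟩).ne'
    obtain ⟨k, hk⟩ := Nat.exists_eq_succ_of_ne_zero hs
    refine ⟨Multiset.card s, Finset.mem_Icc.mpr ⟨Nat.one_le_iff_ne_zero.mpr hs, le_rfl⟩, ?_, ?_⟩
    · rw [hasseDeriv_card_prod_X_sub_C, w.map_one]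
      exact WithTop.zero_ne_top
    · rw [hasseDeriv_card_prod_X_sub_C, w.map_one, zero_add, ← Multiset.prod_map_erase ha₀,
        w.map_mul, hδ, WithTop.top_add, hk, succ_nsmul, WithTop.add_top]
  | coe d =>
    set t := s.filter fun a => w (X - C a) = d
    set u := s.filter fun a => ¬ w (X - C a) = d
    have ht : ∀ a ∈ t, w (X - C a) = d := fun a ha => (Multiset.mem_filter.mp ha).2
    have hu : ∀ a ∈ u, w (X - C a) < d := fun a ha =>
      lt_of_le_of_ne (hδ ▸ hmax a (Multiset.mem_filter.mp ha).1) (Multiset.mem_filter.mp ha).2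
    have hst : (s.map fun a => X - C a).prod =
        (t.map fun a => X - C a).prod * (u.map fun a => X - C a).prod := by
      rw [← Multiset.prod_add, ← Multiset.map_add, Multiset.filter_add_not]
    have ha₀t : a₀ ∈ t := Multiset.mem_filter.mpr ⟨ha₀, hδ⟩
    refine ⟨Multiset.card t, Finset.mem_Icc.mpr ⟨Multiset.card_pos_iff_exists_mem.mpr ⟨a₀, ha₀t⟩,
      Multiset.card_le_card (Multiset.filter_le _ s)⟩, ?_, ?_⟩ <;>
      rw [hst, map_hasseDeriv_card_prod_X_sub_C_mul w ht hu]
    · exact (map_prod_X_sub_C_lt_map_hasseDeriv_add_nsmul w hu one_ne_zero).ne_top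
    · rw [w.map_mul, map_prod_X_sub_C_of_forall_eq w ht, add_comm]

end AddValuation

section Eps

variable {K : Type*} [Field K] {Γ : Type*} [AddCommGroup Γ] [LinearOrder Γ] [IsOrderedAddMonoid Γ]
  [Module ℚ Γ]

theorem epsAt_eq_of_hasseDeriv_eq_coe {v : K[X] → WithTop Γ} {f : K[X]} {b : ℕ} {e : Γ}
    (he : v (hasseDeriv b f) = e) :
    epsAt v f b = ((v f).map fun c => (b : ℚ)⁻¹ • (c - e) : WithTop Γ) := by
  rw [epsAt, dif_neg (by simp [he])]
  simp_rw [he, WithTop.untop_coe]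

theorem epsAt_le_of_le_add_nsmul {v : K[X] → WithTop Γ} {f : K[X]} {b : ℕ} (hb : b ≠ 0)
    {δ : WithTop Γ} (h : v f ≤ v (hasseDeriv b f) + b • δ) : epsAt v f b ≤ δ := by
  cases he : v (hasseDeriv b f) with
  | top => simp [epsAt, he]
  | coe e =>
    rw [he] at h
    rw [epsAt_eq_of_hasseDeriv_eq_coe he]
    cases δ with
    | top => exact WithBot.coe_le_coe.mpr le_top
    | coe d =>
      lift v f to Γ using ne_top_of_le_ne_top WithTop.coe_ne_top h with c
      rw [WithTop.map_coe, WithBot.coe_le_coe, WithTop.coe_le_coe,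
        ← nsmul_le_nsmul_iff_right hb, ← Nat.cast_smul_eq_nsmul ℚ, smul_smul, mul_inv_cancel₀ (Nat.cast_ne_zero.mpr hb),
        one_smul, sub_le_iff_le_add']
      exact_mod_cast h

theorem epsAt_eq_of_eq_add_nsmul {v : K[X] → WithTop Γ} {f : K[X]} {b : ℕ} (hb : b ≠ 0)
    {δ : WithTop Γ} (hne : v (hasseDeriv b f) ≠ ⊤) (h : v f = v (hasseDeriv b f) + b • δ) :
    epsAt v f b = δ := by
  lift v (hasseDeriv b f) to Γ using hne with e he
  rw [epsAt_eq_of_hasseDeriv_eq_coe he.symm, h]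
  cases δ with
  | top =>
    obtain ⟨k, rfl⟩ := Nat.exists_eq_succ_of_ne_zero hb
    rw [succ_nsmul, WithTop.add_top, WithTop.add_top, WithTop.map_top]
  | coe d =>
    rw [← WithTop.coe_nsmul, ← WithTop.coe_add, WithTop.map_coe, add_sub_cancel_left]
    simp [← Nat.cast_smul_eq_nsmul ℚ, smul_smul, hb]

theorem eps_map {L : Type*} [Field L] (φ : K →+* L) {v : K[X] → WithTop Γ}
    {w : L[X] → WithTop Γ} (h : ∀ g, w (g.map φ) = v g) (f : K[X]) :
    eps w (f.map φ) = eps v f := by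
  have hepsAt : epsAt w (f.map φ) = epsAt v f := funext fun b => by
    simp only [epsAt, ← map_hasseDeriv, h]
  rw [eps, eps, natDegree_map, hepsAt]

theorem eps_prod_X_sub_C (w : AddValuation K[X] (WithTop Γ)) (s : Multiset K) :
    eps w (s.map fun a => X - C a).prod =
      (s.map fun a => (w (X - C a) : WithBot (WithTop Γ))).sup := by
  classical
  rcases eq_or_ne s 0 with rfl | hs
  · simp [eps]
  obtain ⟨a₀, ha₀, hmax⟩ := s.toFinset.exists_max_image (fun a => w (X - C a))
    (Multiset.toFinset_nonempty.mpr hs)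
  simp only [Multiset.mem_toFinset] at ha₀ hmax
  have hsup : (s.map fun a => (w (X - C a) : WithBot (WithTop Γ))).sup = w (X - C a₀) :=
    le_antisymm (Multiset.sup_le.mpr fun x hx => by
        obtain ⟨a, ha, rfl⟩ := Multiset.mem_map.mp hx
        exact WithBot.coe_le_coe.mpr (hmax a ha))
      (Multiset.le_sup (Multiset.mem_map_of_mem _ ha₀))
  obtain ⟨b, hb, hne, heq⟩ := w.exists_map_prod_X_sub_C_eq_map_hasseDeriv_add_nsmul ha₀ hmax
  rw [hsup, eps, natDegree_multiset_prod_X_sub_C_eq_card]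
  refine le_antisymm (Finset.sup_le fun b' hb' => epsAt_le_of_le_add_nsmul ?_
    (w.map_prod_X_sub_C_le_map_hasseDeriv_add_nsmul hmax b')) ?_
  · exact Nat.one_le_iff_ne_zero.mp (Finset.mem_Icc.mp hb').1
  · rw [← epsAt_eq_of_eq_add_nsmul (Nat.one_le_iff_ne_zero.mp (Finset.mem_Icc.mp hb).1) hne heq]
    exact Finset.le_sup hb

end Eps

theorem delta_eq_eps_general {K : Type*} [Field K] {Γ : Type*} [AddCommGroup Γ] [LinearOrder Γ] [IsOrderedAddMonoid Γ]
    [Module ℚ Γ]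
    (v : K[X] → WithTop Γ)
    (μ : (AlgebraicClosure K)[X] → WithTop Γ) (hμ : IsVal μ)
    (hext : ∀ f : K[X], μ (f.map (algebraMap K (AlgebraicClosure K))) = v f)
    (f : K[X]) (hf : f.Monic) :
    (((f.map (algebraMap K (AlgebraicClosure K))).roots.map
        fun a => ((μ (X - C a) : WithTop Γ) : WithBot (WithTop Γ))).sup)
      = eps v f := by
  rw [← eps_map _ hext]
  conv_rhs => rw [(IsAlgClosed.splits _).eq_prod_roots_of_monic (hf.map _)]
  exact (eps_prod_X_sub_C hμ.toAddValuation _).symm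

/-- **Proposition 3.1 of [g]**: for every monic `f ∈ K[x]`,
`δ(f) = max{μ(x-a) : a a root of f in K̄}` equals `ε(f)`.
(In particular `δ(f)` does not depend on the chosen extension `μ` of `ν` to `K̄[x]`.) -/
theorem delta_eq_eps {K : Type*} [Field K] {Γ : Type*} [AddCommGroup Γ] [LinearOrder Γ] [IsOrderedAddMonoid Γ]
    [Module ℚ Γ]
    (v : K[X] → WithTop Γ) (hv : IsVal v)
    (μ : (AlgebraicClosure K)[X] → WithTop Γ) (hμ : IsVal μ)
    (hext : ∀ f : K[X], μ (f.map (algebraMap K (AlgebraicClosure K))) = v f)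
    (f : K[X]) (hf : f.Monic) :
    (((f.map (algebraMap K (AlgebraicClosure K))).roots.map
        fun a => ((μ (X - C a) : WithTop Γ) : WithBot (WithTop Γ))).sup)
      = eps v f :=
  delta_eq_eps_general v μ hμ hext f hf
end

section
/- Let (K,ν) be a valued field and {a_ρ}_{ρ<λ} a pseudo-convergent sequence in K. Then for every polynomial f(x) ∈ K[x] there exists ρ_f < λ such that either (1) ν(f(a_σ)) = ν(f(a_{ρ_f})) for every σ with ρ_f ≤ σ < λ, or (2) ν(f(a_σ)) > ν(f(a_ρ)) for every ρ, σ with ρ_f ≤ ρ < σ < λ. -/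
open Polynomial

/-!
Extend `ν` to a valuation of the algebraic closure and split `f = c ∏ (X - b)`; it suffices to
show that each `ν(a_ρ - b)` is eventually constant or eventually strictly increasing, since
sums of such functions are again of this kind. If `ν(a_ρ - b) < ν(a_σ - a_ρ)` for some
`ρ < σ`, then `ν(a_τ - b) = ν(a_ρ - b)` for all `τ ≥ ρ`. Otherwise `ν(a_ρ - b)` equals the
gap `ν(a_σ - a_ρ)` (independent of `σ > ρ`), which increases strictly with `ρ`.

Valuations are written multiplicatively below, so "increasing" becomes "strictly antitone".
-/

section ConstOrStrictAnti

variable {ι α β : Type*} [LinearOrder ι]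

def ConstOrStrictAntiFrom [Preorder α] (δ : ι → α) (ρ₀ : ι) : Prop :=
  (∀ σ, ρ₀ ≤ σ → δ σ = δ ρ₀) ∨ StrictAntiOn δ (Set.Ici ρ₀)

def EventuallyConstOrStrictAnti [Preorder α] (δ : ι → α) : Prop :=
  ∃ ρ₀, ConstOrStrictAntiFrom δ ρ₀

lemma ConstOrStrictAntiFrom.mono [Preorder α] {δ : ι → α} {ρ₀ ρ₁ : ι}
    (h : ConstOrStrictAntiFrom δ ρ₀) (hρ : ρ₀ ≤ ρ₁) : ConstOrStrictAntiFrom δ ρ₁ := by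
  rcases h with hconst | hanti
  · exact Or.inl fun σ hσ => (hconst σ (hρ.trans hσ)).trans (hconst ρ₁ hρ).symm
  · exact Or.inr (hanti.mono (Set.Ici_subset_Ici.mpr hρ))

lemma EventuallyConstOrStrictAnti.of_le_iff [LinearOrder α] [LinearOrder β] {δ : ι → α}
    {δ' : ι → β} (hδ : EventuallyConstOrStrictAnti δ)
    (h : ∀ ρ σ, δ ρ ≤ δ σ ↔ δ' ρ ≤ δ' σ) : EventuallyConstOrStrictAnti δ' := by
  obtain ⟨ρ₀, hconst | hanti⟩ := hδ
  · refine ⟨ρ₀, Or.inl fun σ hσ => ?_⟩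
    have := hconst σ hσ
    rw [le_antisymm_iff, h, h] at this
    exact le_antisymm this.1 this.2
  · refine ⟨ρ₀, Or.inr fun ρ hρ σ hσ hρσ => ?_⟩
    have := hanti hρ hσ hρσ
    rw [lt_iff_le_not_ge, h, h] at this
    exact lt_iff_le_not_ge.mpr this

lemma EventuallyConstOrStrictAnti.const [Nonempty ι] [Preorder α] (c : α) :
    EventuallyConstOrStrictAnti fun _ : ι => c :=
  ⟨Classical.arbitrary ι, Or.inl fun _ _ => rfl⟩

variable {Γ₀ : Type*} [LinearOrderedCommMonoidWithZero Γ₀]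

lemma ConstOrStrictAntiFrom.const_mul {δ₁ δ₂ : ι → Γ₀} {ρ₀ : ι}
    (h₁ : ∀ σ, ρ₀ ≤ σ → δ₁ σ = δ₁ ρ₀) (h₂ : ConstOrStrictAntiFrom δ₂ ρ₀) :
    ConstOrStrictAntiFrom (δ₁ * δ₂) ρ₀ := by
  rcases eq_or_ne (δ₁ ρ₀) 0 with h0 | h0
  · exact Or.inl fun σ hσ => by simp only [Pi.mul_apply, h₁ σ hσ, h0, zero_mul]
  rcases h₂ with hc₂ | ha₂
  · exact Or.inl fun σ hσ => by simp only [Pi.mul_apply, h₁ σ hσ, hc₂ σ hσ]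
  · refine Or.inr fun ρ hρ σ hσ hρσ => ?_
    simp only [Pi.mul_apply, h₁ ρ hρ, h₁ σ hσ]
    exact mul_lt_mul_of_pos_left (ha₂ hρ hσ hρσ) (pos_iff_ne_zero.mpr h0)

lemma ConstOrStrictAntiFrom.mul {δ₁ δ₂ : ι → Γ₀} {ρ₀ : ι} (h₁ : ConstOrStrictAntiFrom δ₁ ρ₀)
    (h₂ : ConstOrStrictAntiFrom δ₂ ρ₀) : ConstOrStrictAntiFrom (δ₁ * δ₂) ρ₀ := by
  rcases h₁ with hc₁ | ha₁
  · exact const_mul hc₁ h₂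
  rcases h₂ with hc₂ | ha₂
  · exact mul_comm δ₂ δ₁ ▸ const_mul hc₂ (Or.inr ha₁)
  · refine Or.inr fun ρ hρ σ hσ hρσ => ?_
    have h₂ := ha₂ hρ hσ hρσ
    exact mul_lt_mul_of_lt_of_le_of_nonneg_of_pos (ha₁ hρ hσ hρσ) h₂.le zero_le
      (zero_le.trans_lt h₂)

lemma EventuallyConstOrStrictAnti.mul {δ₁ δ₂ : ι → Γ₀} (h₁ : EventuallyConstOrStrictAnti δ₁)
    (h₂ : EventuallyConstOrStrictAnti δ₂) : EventuallyConstOrStrictAnti (δ₁ * δ₂) := by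
  obtain ⟨ρ₁, h₁⟩ := h₁
  obtain ⟨ρ₂, h₂⟩ := h₂
  exact ⟨max ρ₁ ρ₂, (h₁.mono (le_max_left _ _)).mul (h₂.mono (le_max_right _ _))⟩

lemma EventuallyConstOrStrictAnti.multiset_prod [Nonempty ι] {s : Multiset β} {δ : β → ι → Γ₀}
    (h : ∀ b ∈ s, EventuallyConstOrStrictAnti (δ b)) :
    EventuallyConstOrStrictAnti fun ρ => (s.map fun b => δ b ρ).prod := by
  induction s using Multiset.induction_on with
  | empty => simpa using EventuallyConstOrStrictAnti.const (ι := ι) (1 : Γ₀)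
  | cons b s ih =>
    simp only [Multiset.map_cons, Multiset.prod_cons]
    exact (h b (Multiset.mem_cons_self b s)).mul
      (ih fun b' hb' => h b' (Multiset.mem_cons_of_mem hb'))

end ConstOrStrictAnti

namespace Valuation

variable {R ι Γ₀ : Type*} [LinearOrder ι]

-- Kaplansky's condition `ν(a_σ - a_ρ) < ν(a_τ - a_σ)`, in multiplicative notation.
def IsPseudoConvergent [Ring R] [LinearOrderedCommMonoidWithZero Γ₀] (w : Valuation R Γ₀)
    (a : ι → R) : Prop :=
  ∀ ⦃ρ σ τ⦄, ρ < σ → σ < τ → w (a τ - a σ) < w (a σ - a ρ)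

namespace IsPseudoConvergent

section Ring

variable [Ring R] [LinearOrderedCommMonoidWithZero Γ₀] {w : Valuation R Γ₀} {a : ι → R}

lemma map_sub_eq (hw : w.IsPseudoConvergent a) {ρ σ τ : ι} (hσ : ρ < σ) (hτ : ρ < τ) :
    w (a σ - a ρ) = w (a τ - a ρ) := by
  have key : ∀ σ τ, ρ < σ → σ < τ → w (a τ - a ρ) = w (a σ - a ρ) := fun σ τ hσ hστ => by
    rw [← sub_add_sub_cancel (a τ) (a σ) (a ρ), w.map_add_eq_of_lt_right (hw hσ hστ)]
  rcases lt_trichotomy σ τ with h | rfl | h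
  · exact (key σ τ hσ h).symm
  · rfl
  · exact key τ σ hτ h

variable [NoMaxOrder ι] [Nonempty ι]

theorem eventuallyConstOrStrictAnti_sub (hw : w.IsPseudoConvergent a) (b : R) :
    EventuallyConstOrStrictAnti fun ρ => w (a ρ - b) := by
  by_cases h : ∃ ρ σ, ρ < σ ∧ w (a σ - a ρ) < w (a ρ - b)
  · obtain ⟨ρ, σ, hρσ, hlt⟩ := h
    refine ⟨ρ, Or.inl fun τ hτ => ?_⟩
    rcases hτ.eq_or_lt with rfl | hτ
    · rfl
    show w (a τ - b) = w (a ρ - b)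
    rw [← sub_add_sub_cancel (a τ) (a ρ) b,
      w.map_add_eq_of_lt_right (hw.map_sub_eq hτ hρσ ▸ hlt)]
  push Not at h
  have heq : ∀ ρ σ, ρ < σ → w (a ρ - b) = w (a σ - a ρ) := by
    intro ρ σ hρσ
    refine (h ρ σ hρσ).antisymm (not_lt.mp fun hlt => ?_)
    obtain ⟨τ, hτ⟩ := exists_gt σ
    have hσb : w (a σ - b) = w (a σ - a ρ) := by
      rw [← sub_add_sub_cancel (a σ) (a ρ) b, w.map_add_eq_of_lt_left hlt]
    exact (h σ τ hτ).not_gt (hσb ▸ hw hρσ hτ)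
  refine ⟨Classical.arbitrary ι, Or.inr fun ρ _ σ _ hρσ => ?_⟩
  obtain ⟨τ, hτ⟩ := exists_gt σ
  show w (a σ - b) < w (a ρ - b)
  rw [heq ρ σ hρσ, heq σ τ hτ]
  exact hw hρσ hτ

end Ring

variable [NoMaxOrder ι] [Nonempty ι]

theorem eventuallyConstOrStrictAnti_eval_of_splits {L : Type*} [Field L]
    [LinearOrderedCommMonoidWithZero Γ₀] {w : Valuation L Γ₀} {a : ι → L}
    (hw : w.IsPseudoConvergent a) {g : L[X]} (hg : g.Splits) :
    EventuallyConstOrStrictAnti fun ρ => w (g.eval (a ρ)) := by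
  have heval : ∀ x, w (g.eval x) = w g.leadingCoeff * (g.roots.map fun b => w (x - b)).prod := by
    intro x
    conv_lhs => rw [hg.eq_prod_roots]
    simp [eval_multiset_prod, map_multiset_prod, Multiset.map_map]
  simp only [heval]
  exact (EventuallyConstOrStrictAnti.const _).mul
    (EventuallyConstOrStrictAnti.multiset_prod fun b _ => hw.eventuallyConstOrStrictAnti_sub b)

end IsPseudoConvergent

end Valuation

theorem ValuationSubring.exists_comap_eq {K L : Type*} [Field K] [Field L] (O : ValuationSubring K)
    (f : K →+* L) : ∃ B : ValuationSubring L, B.comap f = O := by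
  obtain ⟨B, hOB, hloc⟩ := IsLocalRing.exists_factor_valuationRing (f.comp O.subtype)
  refine ⟨B, le_antisymm (fun x hx => ?_) fun x hx => hOB ⟨x, hx⟩⟩
  by_contra hxO
  have hx0 : x ≠ 0 := fun h => hxO (h ▸ O.zero_mem)
  have hinv : x⁻¹ ∈ O := (O.mem_or_inv_mem x).resolve_left hxO
  -- `f x⁻¹` is a unit of `B`, so locality makes `x⁻¹` a unit of `O`, i.e. `x ∈ O`
  have hunit : IsUnit ((f.comp O.subtype).codRestrict B.toSubring hOB ⟨x⁻¹, hinv⟩) :=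
    isUnit_iff_exists_inv.mpr ⟨⟨f x, hx⟩, Subtype.ext (by simp [hx0])⟩
  obtain ⟨⟨y, hy⟩, hyx⟩ := isUnit_iff_exists_inv.mp (hunit.of_map _)
  have hxy : x = y := (inv_mul_eq_one₀ (b := y) hx0).mp (congrArg Subtype.val hyx)
  exact hxO (hxy ▸ hy)

theorem Valuation.exists_isEquiv_comap {K L Γ₀ : Type*} [Field K] [Field L]
    [LinearOrderedCommGroupWithZero Γ₀] (w : Valuation K Γ₀) (f : K →+* L) :
    ∃ B : ValuationSubring L, (B.valuation.comap f).IsEquiv w := by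
  obtain ⟨B, hB⟩ := w.valuationSubring.exists_comap_eq f
  refine ⟨B, (isEquiv_iff_valuationSubring _ _).mpr ?_⟩
  ext x
  rw [mem_valuationSubring_iff, comap_apply, ValuationSubring.valuation_le_one_iff, ← hB,
    ValuationSubring.mem_comap]

theorem Valuation.IsPseudoConvergent.eventuallyConstOrStrictAnti_eval {K ι Γ₀ : Type*} [Field K]
    [LinearOrderedCommGroupWithZero Γ₀] [LinearOrder ι] [NoMaxOrder ι] [Nonempty ι]
    {w : Valuation K Γ₀} {a : ι → K} (hw : w.IsPseudoConvergent a) (f : K[X]) :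
    EventuallyConstOrStrictAnti fun ρ => w (f.eval (a ρ)) := by
  let i := algebraMap K (AlgebraicClosure K)
  obtain ⟨B, hB⟩ := w.exists_isEquiv_comap i
  have hwB : B.valuation.IsPseudoConvergent (i ∘ a) := fun ρ σ τ hρσ hστ => by
    simp only [Function.comp_apply, ← _root_.map_sub i]
    exact hB.lt_iff_lt.mpr (hw hρσ hστ)
  refine (hwB.eventuallyConstOrStrictAnti_eval_of_splits (IsAlgClosed.splits (f.map i))).of_le_iff
    fun ρ σ => ?_
  simp only [Function.comp_apply, eval_map_apply, ← comap_apply]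
  exact hB.le_iff_le

section IsVal

variable {R Γ : Type*} [CommRing R] [AddCommGroup Γ] [LinearOrder Γ] [IsOrderedAddMonoid Γ]
  {v : R → WithTop Γ}

def IsVal.toValuation (hv : IsVal v) : Valuation R (Multiplicative (WithTop Γ)ᵒᵈ) :=
  AddValuation.of v hv.2.2.2 hv.2.2.1 hv.2.1 hv.1

lemma IsVal.isPseudoConvergent_toValuation {ι : Type*} [LinearOrder ι] (hv : IsVal v) {a : ι → R}
    (ha : ∀ ρ σ τ : ι, ρ < σ → σ < τ → v (a σ - a ρ) < v (a τ - a σ)) :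
    hv.toValuation.IsPseudoConvergent a :=
  fun ρ σ τ => ha ρ σ τ

end IsVal

theorem pcs_dichotomy_general {K : Type*} [Field K] {Γ : Type*} [AddCommGroup Γ] [LinearOrder Γ] [IsOrderedAddMonoid Γ]
    {ι : Type*} [LinearOrder ι] [NoMaxOrder ι] [Nonempty ι]
    (v : K → WithTop Γ) (hv : IsVal v)
    (a : ι → K)
    (hpcs : ∀ ρ σ τ : ι, ρ < σ → σ < τ → v (a σ - a ρ) < v (a τ - a σ)) :
    ∀ f : K[X], ∃ ρf : ι,
      (∀ σ : ι, ρf ≤ σ → v (f.eval (a σ)) = v (f.eval (a ρf))) ∨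
      (∀ ρ σ : ι, ρf ≤ ρ → ρ < σ → v (f.eval (a ρ)) < v (f.eval (a σ))) := by
  intro f
  -- `hv.toValuation x` is `v x` itself, read in `Multiplicative (WithTop Γ)ᵒᵈ`
  obtain ⟨ρf, hconst | hanti⟩ :=
    (hv.isPseudoConvergent_toValuation hpcs).eventuallyConstOrStrictAnti_eval f
  · exact ⟨ρf, Or.inl hconst⟩
  · exact ⟨ρf, Or.inr fun ρ σ hρ hρσ => hanti hρ (hρ.trans hρσ.le) hρσ⟩

/-- **Dichotomy for pseudo-convergent sequences** (Kaplansky): for every polynomial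
`f ∈ K[x]` and every pseudo-convergent sequence `{a_ρ}_{ρ<λ}` in a valued field
`(K,ν)`, there exists `ρ_f < λ` such that either `ν(f(a_σ))` is constant for
`σ ≥ ρ_f`, or `ν(f(a_σ))` is strictly increasing for `σ ≥ ρ_f`. -/
theorem pcs_dichotomy {K : Type*} [Field K] {Γ : Type*} [AddCommGroup Γ] [LinearOrder Γ] [IsOrderedAddMonoid Γ]
    {ι : Type*} [LinearOrder ι] [WellFoundedLT ι] [NoMaxOrder ι] [Nonempty ι]
    (v : K → WithTop Γ) (hv : IsVal v) (hvf : ∀ c : K, v c = ⊤ ↔ c = 0)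
    (a : ι → K)
    (hpcs : ∀ ρ σ τ : ι, ρ < σ → σ < τ → v (a σ - a ρ) < v (a τ - a σ)) :
    ∀ f : K[X], ∃ ρf : ι,
      (∀ σ : ι, ρf ≤ σ → v (f.eval (a σ)) = v (f.eval (a ρf))) ∨
      (∀ ρ σ : ι, ρf ≤ ρ → ρ < σ → v (f.eval (a ρ)) < v (f.eval (a σ))) :=
  pcs_dichotomy_general v hv a hpcs
end

section
/- Let (K,ν) be a valued field and {a_ρ}_{ρ<λ} a pseudo-convergent sequence of transcendental type in K without a limit in K. Then there exists an immediate transcendental extension K(z) of K, where the valuation is defined by setting, for each f ∈ K[x], ν(f(z)) equal to the eventually constant value ν(f(a_ρ)) for large ρ. Moreover, for every valued extension K(u) of (K,ν) in which u is a limit of {a_ρ}_{ρ<λ}, there exists a value-preserving K-isomorphism from K(u) to K(z) taking u to z. -/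
open Polynomial

section Helpers
variable {R : Type*} [CommRing R] {Γ : Type*} [AddCommGroup Γ] [LinearOrder Γ] [IsOrderedAddMonoid Γ]
  {v : R → WithTop Γ}

lemma isval_neg (hv : IsVal v) (x : R) : v (-x) = v x := by
  have hm1 : v (-1 : R) = 0 := by
    have h2 : v (-1 : R) + v (-1 : R) = 0 := by
      rw [← hv.1]; simpa using hv.2.2.1
    have ha : v (-1 : R) ≠ ⊤ := by
      intro h; rw [h] at h2; simp at h2
    lift v (-1 : R) to Γ using ha with b hb
    · have hbb : b + b = 0 := by exact_mod_cast h2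
      have hb : b = 0 := by
        rcases lt_trichotomy b 0 with hb | hb | hb
        · exact absurd hbb (add_neg hb hb).ne
        · exact hb
        · exact absurd hbb (add_pos hb hb).ne'
      rw [hb]; rfl
  have : v (-x) = v (-1) + v x := by rw [← hv.1]; ring_nf
  rw [this, hm1, zero_add]

lemma isval_add_eq (hv : IsVal v) {x y : R} (h : v x < v y) : v (x + y) = v x := by
  refine le_antisymm ?_ ?_
  · have h3 : min (v (x + y)) (v y) ≤ v x := by
      have := hv.2.1 (x + y) (-y)
      rw [isval_neg hv, add_neg_cancel_right] at this
      exact this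
    rcases min_cases (v (x + y)) (v y) with ⟨he, _⟩ | ⟨he, _⟩
    · rwa [he] at h3
    · rw [he] at h3; exact absurd h (not_lt.2 h3)
  · have := hv.2.1 x y
    rwa [min_eq_left h.le] at this

lemma isval_sub_le (hv : IsVal v) (x y : R) : min (v x) (v y) ≤ v (x - y) := by
  have := hv.2.1 x (-y)
  rw [isval_neg hv, ← sub_eq_add_neg] at this
  exact this

lemma isval_pow (hv : IsVal v) (x : R) (n : ℕ) : v (x ^ n) = n • v x := by
  induction n with
  | zero => simpa using hv.2.2.1
  | succ n ih => rw [pow_succ, hv.1, ih, succ_nsmul]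

lemma isval_sum_lt (hv : IsVal v) {A : Type*} {s : Finset A} {F : A → R} {c : WithTop Γ}
    (hc : c ≠ ⊤) (h : ∀ j ∈ s, c < v (F j)) : c < v (∑ j ∈ s, F j) := by
  classical
  induction s using Finset.induction with
  | empty => simpa [hv.2.2.2] using lt_top_iff_ne_top.2 hc
  | insert _ _ hj ih =>
    rename_i j s
    rw [Finset.sum_insert hj]
    refine lt_of_lt_of_le ?_ (hv.2.1 _ _)
    exact lt_min (h j (by simp)) (ih fun i hi => h i (by simp [hi]))

lemma isval_sum_eq (hv : IsVal v) {A : Type*} [DecidableEq A] {s : Finset A} {F : A → R}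
    {i₀ : A} (hi : i₀ ∈ s) (h : ∀ j ∈ s, j ≠ i₀ → v (F i₀) < v (F j)) :
    v (∑ j ∈ s, F j) = v (F i₀) := by
  by_cases htop : v (F i₀) = ⊤
  · have hs : s = {i₀} := by
      apply Finset.eq_singleton_iff_unique_mem.2
      exact ⟨hi, fun j hj => by_contra fun hne => absurd (h j hj hne) (by simp [htop])⟩
    simp [hs]
  · rw [← Finset.add_sum_erase s F hi]
    exact isval_add_eq hv (isval_sum_lt hv htop fun j hj =>
      h j (Finset.mem_of_mem_erase hj) (Finset.ne_of_mem_erase hj))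

end Helpers

open scoped Classical in
/-- Indices of nonvanishing Hasse derivatives. -/
noncomputable def hasseSupp {K : Type*} [Field K] (f : K[X]) : Finset ℕ :=
  (Finset.Icc 1 f.natDegree).filter fun i => hasseDeriv i f ≠ 0

lemma mem_hasseSupp {K : Type*} [Field K] {f : K[X]} {i : ℕ} :
    i ∈ hasseSupp f ↔ (1 ≤ i ∧ i ≤ f.natDegree) ∧ hasseDeriv i f ≠ 0 := by
  classical
  unfold hasseSupp
  rw [Finset.mem_filter, Finset.mem_Icc]

lemma eval_aux {K : Type*} [Field K] {Γ : Type*} [AddCommGroup Γ] [LinearOrder Γ] [IsOrderedAddMonoid Γ]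
    {L : Type*} [CommRing L] [Algebra K L]
    (μ : L → WithTop Γ) (hμ : IsVal μ)
    (v : K → WithTop Γ) (hcomp : ∀ c : K, μ (algebraMap K L c) = v c)
    (f : K[X]) (r : K) (u : L) (g : Γ) (hg : μ (u - algebraMap K L r) = (g : WithTop Γ))
    (i₀ : ℕ)
    (hi₀ : i₀ ∈ hasseSupp f)
    (β : ℕ → Γ)
    (hβ : ∀ i ∈ hasseSupp f, v ((hasseDeriv i f).eval r) = (β i : WithTop Γ))
    (hmin : ∀ j ∈ hasseSupp f, j ≠ i₀ → β i₀ + i₀ • g < β j + j • g) :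
    μ (aeval u f - algebraMap K L (f.eval r)) = ((β i₀ + i₀ • g : Γ) : WithTop Γ) := by
  classical
  set S : Finset ℕ := hasseSupp f with hSdef
  set c : K →+* L := algebraMap K L with hc
  set T : ℕ → L := fun i => c ((hasseDeriv i f).eval r) * (u - c r) ^ i with hT
  have key : aeval u f = ∑ i ∈ Finset.range (f.natDegree + 1), T i := by
    have h1 : aeval u f = aeval (u - c r) (taylor r f) := by
      rw [taylor_apply, aeval_comp]
      simp
      rw [hc, sub_add_cancel]
    rw [h1, aeval_eq_sum_range, natDegree_taylor]
    refine Finset.sum_congr rfl fun i _ => ?_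
    rw [taylor_coeff, Algebra.smul_def]
  have hT0 : T 0 = c (f.eval r) := by simp [hT]
  have hsplit : aeval u f - c (f.eval r) = ∑ i ∈ (Finset.range (f.natDegree + 1)).erase 0, T i := by
    rw [key, ← Finset.add_sum_erase _ T (Finset.mem_range.2 (Nat.succ_pos _)), hT0]
    ring
  have hsub : ∑ i ∈ (Finset.range (f.natDegree + 1)).erase 0, T i = ∑ i ∈ S, T i := by
    refine (Finset.sum_subset ?_ ?_).symm
    · intro i hi
      rw [hSdef, mem_hasseSupp] at hi
      rw [Finset.mem_erase, Finset.mem_range]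
      omega
    · intro i hi hni
      have h1i : 1 ≤ i ∧ i ≤ f.natDegree := by
        rw [Finset.mem_erase, Finset.mem_range] at hi; omega
      have : hasseDeriv i f = 0 := by
        by_contra hne
        exact hni (by rw [hSdef, mem_hasseSupp]; exact ⟨h1i, hne⟩)
      simp [hT, this]
  have hval : ∀ i ∈ S, μ (T i) = ((β i + i • g : Γ) : WithTop Γ) := by
    intro i hi
    rw [hT]
    simp only
    rw [hμ.1, isval_pow hμ, hcomp, hβ i hi, hg]
    push_cast
    rfl
  rw [hsplit, hsub]
  rw [isval_sum_eq hμ hi₀ (fun j hj hne => by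
    rw [hval j hj, hval i₀ hi₀]
    exact_mod_cast hmin j hj hne)]
  exact hval i₀ hi₀

section EventualMin
variable {Γ : Type*} [AddCommGroup Γ] [LinearOrder Γ] [IsOrderedAddMonoid Γ] {ι : Type*} [LinearOrder ι]
  [Nonempty ι] [NoMaxOrder ι]

lemma eventual_pair (γ : ι → Γ) (hγ : StrictMono γ) (β : ℕ → Γ) {i j : ℕ}
    (hi : 1 ≤ i) (hj : 1 ≤ j) (hij : i < j) :
    (∀ᶠ ρ in Filter.atTop, β i + i • γ ρ < β j + j • γ ρ) ∨
    (∀ᶠ ρ in Filter.atTop, β j + j • γ ρ < β i + i • γ ρ) := by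
  have hsplit : ∀ x : Γ, j • x = (j - i) • x + i • x := fun x => by
    rw [← add_nsmul]; congr 1; omega
  by_cases hex : ∃ ρ, β i + i • γ ρ ≤ β j + j • γ ρ
  · obtain ⟨ρ', hρ'⟩ := hex
    left
    filter_upwards [Filter.eventually_gt_atTop ρ'] with ρ hρ
    have h2 : β i + i • γ ρ' ≤ (β j + (j - i) • γ ρ') + i • γ ρ' := by
      rwa [add_assoc, ← hsplit (γ ρ')]
    have h3 : β i ≤ β j + (j - i) • γ ρ' := le_of_add_le_add_right h2
    have h4 : (j - i) • γ ρ' < (j - i) • γ ρ :=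
      nsmul_lt_nsmul_right (by omega) (hγ hρ)
    have h5 : β i < β j + (j - i) • γ ρ := h3.trans_lt ((add_lt_add_iff_left _).2 h4)
    have h6 : β i + i • γ ρ < (β j + (j - i) • γ ρ) + i • γ ρ := (add_lt_add_iff_right _).2 h5
    rwa [add_assoc, ← hsplit (γ ρ)] at h6
  · right
    push_neg at hex
    exact Filter.Eventually.of_forall fun ρ => hex ρ

lemma eventual_pair' (γ : ι → Γ) (hγ : StrictMono γ) (β : ℕ → Γ) {i j : ℕ}
    (hi : 1 ≤ i) (hj : 1 ≤ j) (hij : i ≠ j) :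
    (∀ᶠ ρ in Filter.atTop, β i + i • γ ρ < β j + j • γ ρ) ∨
    (∀ᶠ ρ in Filter.atTop, β j + j • γ ρ < β i + i • γ ρ) := by
  rcases lt_or_gt_of_ne hij with h | h
  · exact eventual_pair γ hγ β hi hj h
  · exact (eventual_pair γ hγ β hj hi h).symm

lemma eventual_min (γ : ι → Γ) (hγ : StrictMono γ) (β : ℕ → Γ) (S : Finset ℕ) :
    S.Nonempty → (∀ i ∈ S, 1 ≤ i) →
    ∃ i₀ ∈ S, ∀ᶠ ρ in Filter.atTop, ∀ j ∈ S, j ≠ i₀ →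
      β i₀ + i₀ • γ ρ < β j + j • γ ρ := by
  classical
  induction S using Finset.induction with
  | empty => intro h; exact absurd h (by simp)
  | @insert k S' hk ih =>
    intro _ hS1
    by_cases hS' : S'.Nonempty
    · obtain ⟨i₀, hi₀, hev⟩ := ih hS' (fun i hi => hS1 i (by simp [hi]))
      have hki : k ≠ i₀ := fun h => hk (h ▸ hi₀)
      rcases eventual_pair' γ hγ β (hS1 k (by simp)) (hS1 i₀ (by simp [hi₀])) hki with h | h
      · refine ⟨k, by simp, ?_⟩
        filter_upwards [hev, h] with ρ h1 h2 j hj hne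
        rcases Finset.mem_insert.1 hj with rfl | hj'
        · exact absurd rfl hne
        · rcases eq_or_ne j i₀ with rfl | hji
          · exact h2
          · exact h2.trans (h1 j hj' hji)
      · refine ⟨i₀, by simp [hi₀], ?_⟩
        filter_upwards [hev, h] with ρ h1 h2 j hj hne
        rcases Finset.mem_insert.1 hj with rfl | hj'
        · exact h2
        · exact h1 j hj' hne
    · rw [Finset.not_nonempty_iff_eq_empty] at hS'
      subst hS'
      exact ⟨k, by simp, Filter.Eventually.of_forall fun ρ j hj hne => by
        simp at hj; exact absurd hj hne⟩

end EventualMin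

/-- **Theorem 2 of [Kap]**: if `{a_ρ}_{ρ<λ}` is a pseudo-convergent sequence of
transcendental type in `(K,ν)` without a limit in `K`, then there is an immediate
transcendental extension `K(z)` of `K` (here realized as a valuation `w` on `K[x]`,
`z = x`, with trivial support) defined by letting `w(f)` be the eventually constant
value `ν(f(a_ρ))`; moreover `z = x` is a limit of the sequence and, for every valued
extension `(K(u), μ)` of `(K,ν)` in which `u` is a limit of `{a_ρ}`, the `K`-map
sending `u` to `z` is value-preserving (so it induces a value-preserving
`K`-isomorphism from `K(u)` onto `K(z)`). -/
theorem kaplansky_transcendental_type {K : Type*} [Field K]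
    {Γ : Type*} [AddCommGroup Γ] [LinearOrder Γ] [IsOrderedAddMonoid Γ]
    {ι : Type*} [LinearOrder ι] [WellFoundedLT ι] [NoMaxOrder ι] [Nonempty ι]
    (v : K → WithTop Γ) (hv : IsVal v) (hvf : ∀ c : K, v c = ⊤ ↔ c = 0)
    (a : ι → K)
    (hpcs : ∀ ρ σ τ : ι, ρ < σ → σ < τ → v (a σ - a ρ) < v (a τ - a σ))
    (htr : ∀ f : K[X], ∃ ρf : ι, ∀ σ : ι, ρf ≤ σ → v (f.eval (a σ)) = v (f.eval (a ρf)))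
    (hnolim : ¬∃ z : K, ∀ ρ σ : ι, ρ < σ → v (z - a ρ) = v (a σ - a ρ)) :
    ∃ w : K[X] → WithTop Γ,
      IsVal w ∧
      (∀ c : K, w (C c) = v c) ∧
      (∀ f : K[X], f ≠ 0 → w f ≠ ⊤) ∧
      (∀ f : K[X], ∃ ρf : ι, ∀ σ : ι, ρf ≤ σ → w f = v (f.eval (a σ))) ∧
      (∀ ρ σ : ι, ρ < σ → w (X - C (a ρ)) = v (a σ - a ρ)) ∧
      (∀ f g : K[X], f ≠ 0 → g ≠ 0 → ∃ c : K, w f < w (f - C c * g)) ∧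
      (∀ (L : Type*) [Field L] [Algebra K L] (μ : L → WithTop Γ),
        IsVal μ → (∀ y : L, μ y = ⊤ ↔ y = 0) →
        (∀ c : K, μ (algebraMap K L c) = v c) →
        ∀ u : L, (∀ ρ σ : ι, ρ < σ → μ (u - algebraMap K L (a ρ)) = v (a σ - a ρ)) →
        ∀ f : K[X], μ (Polynomial.aeval u f) = w f) := by
  classical
  obtain ⟨w, hwev0⟩ : ∃ w : K[X] → WithTop Γ,
      ∀ f : K[X], ∀ σ : ι, (htr f).choose ≤ σ → w f = v (f.eval (a σ)) :=
    ⟨fun f => v (f.eval (a (htr f).choose)),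
      fun f σ h => ((htr f).choose_spec σ h).symm⟩
  have hwev : ∀ f : K[X], ∀ᶠ σ in Filter.atTop, w f = v (f.eval (a σ)) := by
    intro f
    filter_upwards [Filter.eventually_ge_atTop (htr f).choose] with σ hσ
    exact hwev0 f σ hσ
  -- γ : breadth values of the pcs
  have hγex : ∀ ρ : ι, ∃ g : Γ, ∀ σ : ι, ρ < σ → v (a σ - a ρ) = (g : WithTop Γ) := by
    intro ρ
    obtain ⟨σ₀, hσ₀⟩ := exists_gt ρ
    have hne : v (a σ₀ - a ρ) ≠ ⊤ := by
      obtain ⟨τ, hτ⟩ := exists_gt σ₀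
      exact fun h => absurd (h ▸ hpcs ρ σ₀ τ hσ₀ hτ) not_top_lt
    lift v (a σ₀ - a ρ) to Γ using hne with g hg
    refine ⟨g, fun σ hσ => ?_⟩
    rcases lt_trichotomy σ σ₀ with h | rfl | h
    · have h2 := isval_add_eq hv (x := a σ - a ρ) (y := a σ₀ - a σ) (hpcs ρ σ σ₀ hσ h)
      rw [add_comm, sub_add_sub_cancel] at h2
      rw [← h2]; exact hg.symm
    · exact hg.symm
    · have h2 := isval_add_eq hv (x := a σ₀ - a ρ) (y := a σ - a σ₀) (hpcs ρ σ₀ σ hσ₀ h)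
      rw [add_comm, sub_add_sub_cancel] at h2
      rw [h2]; exact hg.symm
  obtain ⟨γ, hγ⟩ : ∃ γ : ι → Γ, ∀ ρ σ : ι, ρ < σ → v (a σ - a ρ) = ((γ ρ : Γ) : WithTop Γ) :=
    ⟨fun ρ => (hγex ρ).choose, fun ρ σ h => (hγex ρ).choose_spec σ h⟩
  have hγmono : StrictMono γ := by
    intro ρ ρ' h
    obtain ⟨σ, hσ⟩ := exists_gt ρ'
    have h3 := hpcs ρ ρ' σ h hσ
    rw [hγ ρ ρ' h, hγ ρ' σ hσ] at h3
    exact_mod_cast h3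
  -- injectivity of a and nonvanishing of w
  have hainj : Function.Injective a := by
    intro ρ σ h
    by_contra hne
    rcases lt_or_gt_of_ne hne with hlt | hlt
    · have := hγ ρ σ hlt
      rw [h, sub_self, hv.2.2.2] at this
      exact (WithTop.coe_ne_top this.symm)
    · have := hγ σ ρ hlt
      rw [h, sub_self, hv.2.2.2] at this
      exact (WithTop.coe_ne_top this.symm)
  have hwne : ∀ f : K[X], f ≠ 0 → w f ≠ ⊤ := by
    intro f hf hw
    have hroots : a '' Set.Ici ((htr f).choose) ⊆ {x | f.IsRoot x} := by
      rintro x ⟨σ, hσ, rfl⟩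
      have h1 := hwev0 f σ hσ
      rw [hw] at h1
      exact (hvf _).1 h1.symm
    exact ((Set.Ici_infinite _).image (hainj.injOn))
      ((Polynomial.finite_setOf_isRoot hf).subset hroots)
  -- eventual nonvanishing of evaluations
  have hevne : ∀ f : K[X], f ≠ 0 → ∀ᶠ σ in Filter.atTop, f.eval (a σ) ≠ 0 := by
    intro f hf
    filter_upwards [hwev f] with σ hσ h0
    exact hwne f hf (by rw [hσ, h0, ← hv.2.2.2])
  -- the β data
  have hβex : ∀ f : K[X], f ≠ 0 → ∃ β : ℕ → Γ,
      ∀ i ∈ hasseSupp f, w (hasseDeriv i f) = ((β i : Γ) : WithTop Γ) := by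
    intro f hf
    refine ⟨fun i => (w (hasseDeriv i f)).untopD 0, fun i hi => ?_⟩
    have hne : w (hasseDeriv i f) ≠ ⊤ := hwne _ (mem_hasseSupp.1 hi).2
    cases h : w (hasseDeriv i f) with
    | top => exact absurd h hne
    | coe b => simp [h]
  -- main eventual bundle for nonconstant f
  have hmain : ∀ f : K[X], 1 ≤ f.natDegree →
      ∃ i₀ ∈ hasseSupp f, ∃ β : ℕ → Γ,
        ∀ᶠ ρ in Filter.atTop,
          (∀ i ∈ hasseSupp f, v ((hasseDeriv i f).eval (a ρ)) = ((β i : Γ) : WithTop Γ)) ∧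
          (∀ j ∈ hasseSupp f, j ≠ i₀ → β i₀ + i₀ • γ ρ < β j + j • γ ρ) ∧
          w f = v (f.eval (a ρ)) ∧
          w f < ((β i₀ + i₀ • γ ρ : Γ) : WithTop Γ) := by
    intro f hdeg
    have hf0 : f ≠ 0 := fun h => by simp [h] at hdeg
    have hSne : (hasseSupp f).Nonempty := by
      refine ⟨f.natDegree, mem_hasseSupp.2 ⟨⟨hdeg, le_refl _⟩, fun h => ?_⟩⟩
      have := Polynomial.hasseDeriv_coeff f.natDegree f 0
      rw [h] at this
      simp at this
      exact hf0 (Polynomial.leadingCoeff_eq_zero.1 this.symm)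
    have hS1 : ∀ i ∈ hasseSupp f, 1 ≤ i := fun i hi => (mem_hasseSupp.1 hi).1.1
    obtain ⟨β, hβ⟩ := hβex f hf0
    obtain ⟨i₀, hi₀, hminev⟩ := eventual_min γ hγmono β (hasseSupp f) hSne hS1
    -- coefficient stabilization
    have hstab : ∀ᶠ ρ in Filter.atTop,
        ∀ i ∈ hasseSupp f, v ((hasseDeriv i f).eval (a ρ)) = ((β i : Γ) : WithTop Γ) := by
      rw [Filter.eventually_all_finset]
      intro i hi
      filter_upwards [hwev (hasseDeriv i f)] with ρ hρ
      rw [← hρ, hβ i hi]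
    -- at any good ρ, the differences have value t i₀ ρ
    have hval : ∀ ρ : ι,
        (∀ i ∈ hasseSupp f, v ((hasseDeriv i f).eval (a ρ)) = ((β i : Γ) : WithTop Γ)) →
        (∀ j ∈ hasseSupp f, j ≠ i₀ → β i₀ + i₀ • γ ρ < β j + j • γ ρ) →
        ∀ σ : ι, ρ < σ →
          v (f.eval (a σ) - f.eval (a ρ)) = ((β i₀ + i₀ • γ ρ : Γ) : WithTop Γ) := by
      intro ρ h1 h2 σ hσ
      have heq := eval_aux (L := K) v hv v (fun c => by simp) f (a ρ) (a σ) (γ ρ)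
        (by simpa using hγ ρ σ hσ) i₀ hi₀ β (fun i hi => h1 i hi) h2
      simpa using heq
    refine ⟨i₀, hi₀, β, ?_⟩
    -- first: t i₀ ρ ≥ w f eventually (need one good point)
    obtain ⟨ρ₁, ⟨hρ₁s, hρ₁m⟩, hρ₁w⟩ := ((hstab.and hminev).and (hwev f)).exists
    have hge : w f ≤ ((β i₀ + i₀ • γ ρ₁ : Γ) : WithTop Γ) := by
      obtain ⟨σ, hσw, hσgt⟩ := ((hwev f).and (Filter.eventually_gt_atTop ρ₁)).exists
      rw [← hval ρ₁ hρ₁s hρ₁m σ hσgt]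
      have := isval_sub_le hv (f.eval (a σ)) (f.eval (a ρ₁))
      rwa [← hσw, ← hρ₁w, min_self] at this
    filter_upwards [hstab, hminev, hwev f, Filter.eventually_gt_atTop ρ₁] with ρ h1 h2 h3 h4
    refine ⟨h1, h2, h3, lt_of_le_of_lt hge ?_⟩
    have hlt : β i₀ + i₀ • γ ρ₁ < β i₀ + i₀ • γ ρ :=
      (add_lt_add_iff_left _).2 (nsmul_lt_nsmul_right (Nat.one_le_iff_ne_zero.1 (hS1 i₀ hi₀)) (hγmono h4))
    exact_mod_cast hlt
  -- differences eventually exceed w f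
  have hdiff : ∀ f : K[X], f ≠ 0 → ∀ᶠ ρ in Filter.atTop, ∀ σ : ι, ρ < σ →
      w f < v (f.eval (a σ) - f.eval (a ρ)) := by
    intro f hf
    rcases Nat.eq_zero_or_pos f.natDegree with h0 | hpos
    · have hC : f = C (f.coeff 0) := Polynomial.eq_C_of_natDegree_eq_zero h0
      filter_upwards with ρ σ hσ
      rw [hC]
      simp only [Polynomial.eval_C, sub_self, hv.2.2.2]
      exact lt_top_iff_ne_top.2 (by rw [← hC]; exact hwne f hf)
    · obtain ⟨i₀, hi₀, β, hE⟩ := hmain f hpos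
      filter_upwards [hE] with ρ hρ σ hσ
      obtain ⟨h1, h2, _, h4⟩ := hρ
      -- build hval inline via eval_aux
      have heq := eval_aux (L := K) v hv v (fun c => by simp) f (a ρ) (a σ) (γ ρ)
        (by simpa using hγ ρ σ hσ) i₀ hi₀ β (fun i hi => h1 i hi) h2
      have heq2 : v (f.eval (a σ) - f.eval (a ρ)) = ((β i₀ + i₀ • γ ρ : Γ) : WithTop Γ) := by
        simpa using heq
      rw [heq2]
      exact h4
  refine ⟨w, ⟨?_, ?_, ?_, ?_⟩, ?_, hwne, ?_, ?_, ?_, ?_⟩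
  · -- multiplicative
    intro f g
    obtain ⟨σ, hf, hg, hfg⟩ := ((hwev f).and ((hwev g).and (hwev (f * g)))).exists
    rw [hf, hg, hfg, Polynomial.eval_mul, hv.1]
  · -- ultrametric
    intro f g
    obtain ⟨σ, hf, hg, hfg⟩ := ((hwev f).and ((hwev g).and (hwev (f + g)))).exists
    rw [hf, hg, hfg, Polynomial.eval_add]
    exact hv.2.1 _ _
  · -- one
    obtain ⟨σ, h1⟩ := (hwev 1).exists
    rw [h1, Polynomial.eval_one, hv.2.2.1]
  · -- zero
    obtain ⟨σ, h0⟩ := (hwev 0).exists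
    rw [h0, Polynomial.eval_zero, hv.2.2.2]
  · -- constants
    intro c
    obtain ⟨σ, h1⟩ := (hwev (C c)).exists
    rw [h1, Polynomial.eval_C]
  · -- eventual values
    intro f
    exact Filter.eventually_atTop.1 (hwev f)
  · -- z is a limit
    intro ρ σ hσ
    obtain ⟨τ, h1, h2⟩ := ((hwev (X - C (a ρ))).and (Filter.eventually_gt_atTop ρ)).exists
    rw [h1]
    simp only [Polynomial.eval_sub, Polynomial.eval_X, Polynomial.eval_C]
    rw [hγ ρ τ h2, hγ ρ σ hσ]
  · -- residue field does not grow
    intro f g hf hg0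
    obtain ⟨σ, hwf, hwg, hdf, hdg, hfne, hgne⟩ :=
      ((hwev f).and ((hwev g).and ((hdiff f hf).and ((hdiff g hg0).and
        ((hevne f hf).and (hevne g hg0)))))).exists
    set c : K := f.eval (a σ) / g.eval (a σ) with hc
    have hc0 : c ≠ 0 := div_ne_zero hfne hgne
    refine ⟨c, ?_⟩
    obtain ⟨τ, h1, h2⟩ := ((hwev (f - C c * g)).and (Filter.eventually_gt_atTop σ)).exists
    rw [h1]
    have hcg : c * g.eval (a σ) = f.eval (a σ) := div_mul_cancel₀ _ hgne
    have hrw : (f - C c * g).eval (a τ) =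
        (f.eval (a τ) - f.eval (a σ)) - c * (g.eval (a τ) - g.eval (a σ)) := by
      simp only [Polynomial.eval_sub, Polynomial.eval_mul, Polynomial.eval_C]
      rw [mul_sub, hcg]
      ring
    rw [hrw]
    have hvc : v c ≠ ⊤ := fun h => hc0 ((hvf c).1 h)
    have hb1 : w f < v (f.eval (a τ) - f.eval (a σ)) := hdf τ h2
    have hb2 : w f < v (c * (g.eval (a τ) - g.eval (a σ))) := by
      rw [hv.1]
      have hwfc : w f = v c + v (g.eval (a σ)) := by
        rw [← hv.1, hcg, hwf]
      rw [hwfc]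
      exact WithTop.add_lt_add_left hvc (hwg ▸ hdg τ h2)
    exact lt_of_lt_of_le (lt_min hb1 hb2) (isval_sub_le hv _ _)
  · -- universal property
    intro L _ _ μ hμ hμf hcomp u hu f
    rcases Nat.eq_zero_or_pos f.natDegree with h0 | hpos
    · have hC : f = C (f.coeff 0) := Polynomial.eq_C_of_natDegree_eq_zero h0
      rw [hC, Polynomial.aeval_C, hcomp]
      obtain ⟨σ, h1⟩ := (hwev (C (f.coeff 0))).exists
      rw [h1, Polynomial.eval_C]
    · obtain ⟨i₀, hi₀, β, hE⟩ := hmain f hpos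
      obtain ⟨ρ, h1, h2, h3, h4⟩ := hE.exists
      obtain ⟨σ, hσ⟩ := exists_gt ρ
      have hg : μ (u - algebraMap K L (a ρ)) = ((γ ρ : Γ) : WithTop Γ) := by
        rw [hu ρ σ hσ, hγ ρ σ hσ]
      have heval := eval_aux μ hμ v hcomp f (a ρ) u (γ ρ) hg i₀ hi₀ β
        (fun i hi => h1 i hi) h2
      have h5 : μ (algebraMap K L (f.eval (a ρ))) = w f := by rw [hcomp, h3]
      have h6 := isval_add_eq hμ (x := algebraMap K L (f.eval (a ρ)))
        (y := aeval u f - algebraMap K L (f.eval (a ρ)))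
        (by rw [h5, heval]; exact h4)
      have h7 : algebraMap K L (f.eval (a ρ)) +
          (aeval u f - algebraMap K L (f.eval (a ρ))) = aeval u f := by ring
      rw [h7] at h6
      rw [h6, h5]
end
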